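/- arXiv:1805.04673 — 4 statements merged into one kernel-verified Lean document; each statement's English description precedes it below -/
import Mathlib

section
/- Let N be an odd positive integer, θ ∈ (0, π/2), and k ∈ {0, 1, …, 2N−1}, and set λ_k = exp(πik/N). Then the vector v ∈ ℂ^(2N) whose components are v_{(0,n)} = a_n(λ_k) and v_{(1,n)} = b_n(λ_k) for 0 ≤ n ≤ N−1 is an eigenvector of U_psw(θ): U_psw(θ)·v = λ_k·v. -/
open Complex

/-- `ω = exp(2πi/N)`. -/
noncomputable def omegaN (N : ℕ) : ℂ := Complex.exp (2 * Real.pi * Complex.I / N)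

/-- The phase-space quantum walk operator `U_psw(θ)`, a `2N × 2N` matrix indexed by
(coin, walker) pairs, with block form `[[cosθ·T, sinθ·T],[sinθ·T̃, −cosθ·T̃]]`,
where `T` is the cyclic shift (`T|n⟩ = |n+1⟩`) and `T̃` the diagonal matrix with
`T̃|n⟩ = ω^n|n⟩`. -/
noncomputable def Upsw (N : ℕ) (θ : ℝ) :
    Matrix (Fin 2 × ZMod N) (Fin 2 × ZMod N) ℂ := fun p q =>
  if p.1 = 0 then
    (if q.1 = 0 then (Real.cos θ : ℂ) else (Real.sin θ : ℂ)) *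
      (if p.2 = q.2 + 1 then 1 else 0)
  else
    (if q.1 = 0 then (Real.sin θ : ℂ) else (-Real.cos θ : ℂ)) *
      (if p.2 = q.2 then omegaN N ^ (q.2.val) else 0)

/-- `a_n(λ) = ω^(−n(n−1)/2) · ∏_{j=0}^{n−1} (1 + λ⁻¹ωʲ/cosθ)/(1 + λω⁻ʲ/cosθ)`. -/
noncomputable def aCoef (N : ℕ) (θ : ℝ) (lam : ℂ) (n : ℕ) : ℂ :=
  (omegaN N)⁻¹ ^ (n * (n - 1) / 2) *
    ∏ j ∈ Finset.range n,
      (1 + lam⁻¹ * omegaN N ^ j / (Real.cos θ : ℂ)) /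
      (1 + lam * (omegaN N)⁻¹ ^ j / (Real.cos θ : ℂ))

/-- `b_n(λ) = a_n(λ)·tanθ/(1 + λω⁻ⁿ/cosθ)`. -/
noncomputable def bCoef (N : ℕ) (θ : ℝ) (lam : ℂ) (n : ℕ) : ℂ :=
  aCoef N θ lam n * (Real.tan θ : ℂ) / (1 + lam * (omegaN N)⁻¹ ^ n / (Real.cos θ : ℂ))

/-! The coefficients are built so that the eigenvalue equation becomes two recurrences:
`λ b_n = ωⁿ (sin θ · a_n − cos θ · b_n)` is the definition of `b_n`, and
`λ a_{n+1} = cos θ · a_n + sin θ · b_n` is (using `sin² + cos² = 1`) the definition of `a_{n+1}`.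
What remains is that the recurrence closes up around the cycle, `a_N = a_0 = 1`. For odd `N` the
power `ω^(N(N-1)/2)` is `1`, and `∏_{j<N} (1 + μ ζʲ) = 1 + μᴺ` for a primitive `N`-th root `ζ`
turns numerator and denominator of `a_N` into `1 + (λ⁻¹/cos θ)ᴺ` and `1 + (λ/cos θ)ᴺ`, which agree
since `λ^(2N) = 1`. All denominators are nonzero because `‖λ ω⁻ʲ / cos θ‖ = 1 / cos θ > 1`. -/

open Finset Polynomial Matrix

theorem IsPrimitiveRoot.prod_range_one_add_mul_pow {R : Type*} [CommRing R] [IsDomain R]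
    {N : ℕ} (hN : Odd N) {ζ : R} (hζ : IsPrimitiveRoot ζ N) (μ : R) :
    ∏ j ∈ range N, (1 + μ * ζ ^ j) = 1 + μ ^ N := by
  have h := congrArg (eval 1) (X_pow_sub_C_eq_prod hζ hN.pos (hN.neg_pow μ))
  simp only [eval_sub, eval_pow, eval_X, eval_C, eval_prod, one_pow, sub_neg_eq_add] at h
  rw [h]
  exact prod_congr rfl fun j _ => by ring

theorem ZMod.apply_val_add_one {α : Type*} {N : ℕ} [NeZero N] {f : ℕ → α} (hf : f N = f 0)
    (m : ZMod N) : f (m + 1).val = f (m.val + 1) := by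
  have hcast : m + 1 = ((m.val + 1 : ℕ) : ZMod N) := by
    rw [Nat.cast_succ, ZMod.natCast_zmod_val]
  rcases Nat.lt_or_ge (m.val + 1) N with h | h
  · rw [hcast, ZMod.val_cast_of_lt h]
  · rw [hcast, show m.val + 1 = N by have := m.val_lt; omega, ZMod.natCast_self, ZMod.val_zero, hf]

theorem one_add_ne_zero_of_one_lt_norm {R : Type*} [SeminormedRing R] [NormOneClass R] {w : R}
    (hw : 1 < ‖w‖) : 1 + w ≠ 0 := fun h => by
  rw [eq_neg_of_add_eq_zero_right h, norm_neg, norm_one] at hw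
  exact lt_irrefl 1 hw

theorem mul_add_ne_zero_of_one_add_mul_inv_div_ne_zero {K : Type*} [Field K] {c z l : K}
    (hc : c ≠ 0) (hz : z ≠ 0) (h : 1 + l * z⁻¹ / c ≠ 0) : c * z + l ≠ 0 := by
  rw [show c * z + l = c * z * (1 + l * z⁻¹ / c) by field_simp]
  exact mul_ne_zero (mul_ne_zero hc hz) h

theorem norm_omegaN (N : ℕ) : ‖omegaN N‖ = 1 := by
  simp [omegaN, Complex.norm_exp]

theorem isPrimitiveRoot_omegaN {N : ℕ} (hN : N ≠ 0) : IsPrimitiveRoot (omegaN N) N :=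
  Complex.isPrimitiveRoot_exp N hN

theorem one_add_mul_inv_omegaN_pow_div_cos_ne_zero {N : ℕ} {θ : ℝ} {lam : ℂ}
    (hc0 : 0 < Real.cos θ) (hc1 : Real.cos θ < 1) (hlam : ‖lam‖ = 1) (j : ℕ) :
    1 + lam * (omegaN N)⁻¹ ^ j / Real.cos θ ≠ 0 := by
  refine one_add_ne_zero_of_one_lt_norm ?_
  rw [norm_div, norm_mul, norm_pow, norm_inv, norm_omegaN, hlam, Complex.norm_real,
    Real.norm_of_nonneg hc0.le, inv_one, one_pow, one_mul]
  exact one_lt_one_div hc0 hc1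

theorem Upsw_mulVec_zero_add_one (N : ℕ) [NeZero N] (θ : ℝ) (v : Fin 2 × ZMod N → ℂ)
    (n : ZMod N) :
    (Upsw N θ *ᵥ v) (0, n + 1) = (Real.cos θ : ℂ) * v (0, n) + (Real.sin θ : ℂ) * v (1, n) := by
  simp [Matrix.mulVec, dotProduct, Fintype.sum_prod_type, Upsw]

theorem Upsw_mulVec_one (N : ℕ) [NeZero N] (θ : ℝ) (v : Fin 2 × ZMod N → ℂ) (n : ZMod N) :
    (Upsw N θ *ᵥ v) (1, n) =
      omegaN N ^ n.val * ((Real.sin θ : ℂ) * v (0, n) - (Real.cos θ : ℂ) * v (1, n)) := by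
  simp [Matrix.mulVec, dotProduct, Fintype.sum_prod_type, Upsw]
  ring

theorem aCoef_zero (N : ℕ) (θ : ℝ) (lam : ℂ) : aCoef N θ lam 0 = 1 := by
  simp [aCoef]

theorem aCoef_succ (N : ℕ) (θ : ℝ) (lam : ℂ) (n : ℕ) :
    aCoef N θ lam (n + 1) = (omegaN N)⁻¹ ^ n * aCoef N θ lam n *
      ((1 + lam⁻¹ * omegaN N ^ n / Real.cos θ) / (1 + lam * (omegaN N)⁻¹ ^ n / Real.cos θ)) := by
  rw [aCoef, aCoef, prod_range_succ, Nat.triangle_succ, pow_add]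
  ring

theorem aCoef_self {N : ℕ} (hN : Odd N) {θ : ℝ} {lam : ℂ} (hlam : lam ^ (2 * N) = 1)
    (hD : ∀ j, 1 + lam * (omegaN N)⁻¹ ^ j / Real.cos θ ≠ 0) : aCoef N θ lam N = 1 := by
  have hω := isPrimitiveRoot_omegaN hN.pos.ne'
  obtain ⟨r, hr⟩ := hN
  have hexp : N * (N - 1) / 2 = N * r := by
    rw [show N - 1 = 2 * r by omega, mul_left_comm, Nat.mul_div_cancel_left _ two_pos]
  have hprod : ∀ μ : ℂ, ∀ ζ, IsPrimitiveRoot ζ N →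
      ∏ j ∈ range N, (1 + μ * ζ ^ j / Real.cos θ) = 1 + (μ / Real.cos θ) ^ N := fun μ ζ hζ => by
    rw [← hζ.prod_range_one_add_mul_pow ⟨r, hr⟩]
    exact prod_congr rfl fun j _ => by ring
  have hsym : lam⁻¹ ^ N = lam ^ N := by
    rw [inv_pow, inv_eq_of_mul_eq_one_left (by rw [← pow_add, ← two_mul, hlam])]
  rw [aCoef, hexp, pow_mul, hω.inv.pow_eq_one, one_pow, one_mul, prod_div_distrib,
    hprod _ _ hω, hprod _ _ hω.inv, div_pow, div_pow, hsym, div_self]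
  rw [← div_pow, ← hprod _ _ hω.inv]
  exact prod_ne_zero_iff.mpr fun j _ => hD j

section Recurrences

variable {N : ℕ} {θ : ℝ} {lam : ℂ}

theorem cos_mul_aCoef_add_sin_mul_bCoef (hc : Real.cos θ ≠ 0) (hlam : lam ≠ 0) (m : ℕ)
    (hD : 1 + lam * (omegaN N)⁻¹ ^ m / Real.cos θ ≠ 0) :
    Real.cos θ * aCoef N θ lam m + Real.sin θ * bCoef N θ lam m = lam * aCoef N θ lam (m + 1) := by
  have hz : omegaN N ^ m ≠ 0 := pow_ne_zero m (Complex.exp_ne_zero _)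
  have hc' : (Real.cos θ : ℂ) ≠ 0 := Complex.ofReal_ne_zero.mpr hc
  have hpy : (Real.sin θ : ℂ) ^ 2 + (Real.cos θ : ℂ) ^ 2 = 1 := by
    exact_mod_cast Real.sin_sq_add_cos_sq θ
  rw [bCoef, aCoef_succ, Real.tan_eq_sin_div_cos, Complex.ofReal_div]
  simp only [inv_pow] at hD ⊢
  generalize omegaN N ^ m = z at hz hD ⊢
  have hD' := mul_add_ne_zero_of_one_add_mul_inv_div_ne_zero hc' hz hD
  field_simp
  linear_combination aCoef N θ lam m * z * hpy

theorem omegaN_pow_mul_sin_mul_aCoef_sub_cos_mul_bCoef (hc : Real.cos θ ≠ 0) (m : ℕ)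
    (hD : 1 + lam * (omegaN N)⁻¹ ^ m / Real.cos θ ≠ 0) :
    omegaN N ^ m * (Real.sin θ * aCoef N θ lam m - Real.cos θ * bCoef N θ lam m) =
      lam * bCoef N θ lam m := by
  have hz : omegaN N ^ m ≠ 0 := pow_ne_zero m (Complex.exp_ne_zero _)
  have hc' : (Real.cos θ : ℂ) ≠ 0 := Complex.ofReal_ne_zero.mpr hc
  rw [bCoef, Real.tan_eq_sin_div_cos, Complex.ofReal_div]
  simp only [inv_pow] at hD ⊢
  generalize omegaN N ^ m = z at hz hD ⊢
  have hD' := mul_add_ne_zero_of_one_add_mul_inv_div_ne_zero hc' hz hD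
  rw [mul_comm] at hD'
  field_simp
  ring

end Recurrences

theorem psw_eigenvector_general (N : ℕ) [NeZero N] (hN : Odd N)
    (θ : ℝ) (hθ : θ ∈ Set.Ioo 0 (Real.pi / 2))
    (k : ℕ)
    (lam : ℂ) (hlam : lam = Complex.exp (Real.pi * Complex.I * k / N))
    (v : Fin 2 × ZMod N → ℂ)
    (hv0 : ∀ n : ZMod N, v (0, n) = aCoef N θ lam n.val)
    (hv1 : ∀ n : ZMod N, v (1, n) = bCoef N θ lam n.val) :
    (Upsw N θ).mulVec v = lam • v := by
  have hc0 : 0 < Real.cos θ := Real.cos_pos_of_mem_Ioo ⟨by linarith [hθ.1, Real.pi_pos], hθ.2⟩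
  have hc1 : Real.cos θ < 1 := by
    simpa using Real.cos_lt_cos_of_nonneg_of_le_pi_div_two le_rfl hθ.2.le hθ.1
  have hlam2N : lam ^ (2 * N) = 1 := by
    rw [hlam, ← Complex.exp_nat_mul, ← Complex.exp_nat_mul_two_pi_mul_I k]
    have hN0 : (N : ℂ) ≠ 0 := Nat.cast_ne_zero.mpr hN.pos.ne'
    congr 1
    push_cast
    field_simp
  have hlam1 : ‖lam‖ = 1 := Complex.norm_eq_one_of_pow_eq_one hlam2N (by have := hN.pos; omega)
  have hlam0 : lam ≠ 0 := by
    rintro rfl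
    simp at hlam1
  have hD := one_add_mul_inv_omegaN_pow_div_cos_ne_zero (N := N) hc0 hc1 hlam1
  have hperiodic : aCoef N θ lam N = aCoef N θ lam 0 := by
    rw [aCoef_self hN hlam2N hD, aCoef_zero]
  ext ⟨i, n⟩
  match i with
  | 0 =>
    obtain ⟨m, rfl⟩ : ∃ m, n = m + 1 := ⟨n - 1, (sub_add_cancel n 1).symm⟩
    rw [Upsw_mulVec_zero_add_one, Pi.smul_apply, smul_eq_mul, hv0, hv1, hv0,
      ZMod.apply_val_add_one hperiodic]
    exact cos_mul_aCoef_add_sin_mul_bCoef hc0.ne' hlam0 _ (hD _)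
  | 1 =>
    rw [Upsw_mulVec_one, Pi.smul_apply, smul_eq_mul, hv0, hv1]
    exact omegaN_pow_mul_sin_mul_aCoef_sub_cos_mul_bCoef hc0.ne' _ (hD _)

/-- for odd `N`, `θ ∈ (0, π/2)` and `0 ≤ k < 2N`, the vector with
components `a_n(λ_k)` and `b_n(λ_k)` is an eigenvector of `U_psw(θ)` with
eigenvalue `λ_k = exp(πik/N)`. -/
theorem psw_eigenvector (N : ℕ) [NeZero N] (hN : Odd N)
    (θ : ℝ) (hθ : θ ∈ Set.Ioo 0 (Real.pi / 2))
    (k : ℕ) (hk : k < 2 * N)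
    (lam : ℂ) (hlam : lam = Complex.exp (Real.pi * Complex.I * k / N))
    (v : Fin 2 × ZMod N → ℂ)
    (hv0 : ∀ n : ZMod N, v (0, n) = aCoef N θ lam n.val)
    (hv1 : ∀ n : ZMod N, v (1, n) = bCoef N θ lam n.val) :
    (Upsw N θ).mulVec v = lam • v :=
  psw_eigenvector_general N hN θ hθ k lam hlam v hv0 hv1
end

section
/- Let N be a positive integer, θ ∈ (0, π/2), ω = exp(2πi/N), and λ ∈ ℂ with |λ| = 1. Suppose complex numbers (a_n)_{n∈ℤ/N} and (b_n)_{n∈ℤ/N} satisfy, for all n, the relations sinθ·a_n − cosθ·b_n = λ·ω^(−n)·b_n and cosθ·a_{n−1} + sinθ·b_{n−1} = λ·a_n (indices mod N). Then for all n ∈ ℤ/Nℤ: (i) b_n·(1 + λω^(−n)/cosθ) = a_n·tanθ, and (ii) a_n·(cosθ + λ·ω^(−n+1)) = a_{n−1}·(λ^(−1) + cosθ·ω^(−n+1)). -/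
open Complex

/-!
Both identities are pure algebra in the unknowns `a_{n-1}, b_{n-1}, a_n`, valid for any `ω`.
(i) is the first relation divided by `cos θ`. For (ii), eliminating `b_{n-1}` from the first
relation at `n - 1` and the second at `n` (using `sin² + cos² = 1`) gives
`a_{n-1} (1 + cos θ · λ w) = λ a_n (cos θ + λ w)` with `w = ω^(-n+1)`; dividing by `λ` gives (ii).
-/

section RotationRecursion

variable {K : Type*} [Field K] {c s lam w a a' b b' : K}

theorem mul_one_add_div_eq_mul_div_of_sub_eq (hc : c ≠ 0)
    (h : s * a - c * b = lam * w * b) :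
    b * (1 + lam * w / c) = a * (s / c) := by
  field_simp
  linear_combination -h

theorem mul_one_add_mul_eq_of_rotation (hsc : s ^ 2 + c ^ 2 = 1)
    (h₁ : s * a' - c * b' = lam * w * b') (h₂ : c * a' + s * b' = lam * a) :
    a' * (1 + c * lam * w) = lam * a * (c + lam * w) := by
  linear_combination (c + lam * w) * h₂ + s * h₁ - a' * hsc

theorem mul_add_eq_mul_inv_add_of_rotation (hlam : lam ≠ 0) (hsc : s ^ 2 + c ^ 2 = 1)
    (h₁ : s * a' - c * b' = lam * w * b') (h₂ : c * a' + s * b' = lam * a) :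
    a * (c + lam * w) = a' * (lam⁻¹ + c * w) := by
  field_simp
  linear_combination -mul_one_add_mul_eq_of_rotation hsc h₁ h₂

end RotationRecursion

theorem psw_recursion_consequences_general (N : ℕ)
    (θ : ℝ) (hθ : θ ∈ Set.Ioo 0 (Real.pi / 2))
    (lam : ℂ) (hlam : ‖lam‖ = 1)
    (a b : ZMod N → ℂ)
    (h1 : ∀ n : ZMod N,
      (Real.sin θ : ℂ) * a n - (Real.cos θ : ℂ) * b n
        = lam * (omegaN N)⁻¹ ^ n.val * b n)
    (h2 : ∀ n : ZMod N,
      (Real.cos θ : ℂ) * a (n - 1) + (Real.sin θ : ℂ) * b (n - 1) = lam * a n) :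
    ∀ n : ZMod N,
      b n * (1 + lam * (omegaN N)⁻¹ ^ n.val / (Real.cos θ : ℂ))
          = a n * (Real.tan θ : ℂ) ∧
      a n * ((Real.cos θ : ℂ) + lam * (omegaN N)⁻¹ ^ (n - 1).val)
          = a (n - 1) * (lam⁻¹ + (Real.cos θ : ℂ) * (omegaN N)⁻¹ ^ (n - 1).val) := by
  have hcos : (Real.cos θ : ℂ) ≠ 0 :=
    ofReal_ne_zero.mpr (Real.cos_pos_of_mem_Ioo ⟨by linarith [hθ.1, Real.pi_pos], hθ.2⟩).ne'
  have hlam0 : lam ≠ 0 := norm_ne_zero_iff.mp (by simp [hlam])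
  have hsc : (Real.sin θ : ℂ) ^ 2 + (Real.cos θ : ℂ) ^ 2 = 1 := by
    exact_mod_cast Real.sin_sq_add_cos_sq θ
  intro n
  rw [Real.tan_eq_sin_div_cos, ofReal_div]
  exact ⟨mul_one_add_div_eq_mul_div_of_sub_eq hcos (h1 n),
    mul_add_eq_mul_inv_add_of_rotation hlam0 hsc (h1 (n - 1)) (h2 n)⟩

/-- if `(a_n)` and `(b_n)` (indices in `ℤ/N`) satisfy the eigenvalue
recursions `sinθ·a_n − cosθ·b_n = λ·ω⁻ⁿ·b_n` and
`cosθ·a_{n−1} + sinθ·b_{n−1} = λ·a_n`, with `|λ| = 1` and `θ ∈ (0, π/2)`, then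
(i) `b_n·(1 + λω⁻ⁿ/cosθ) = a_n·tanθ` and
(ii) `a_n·(cosθ + λ·ω^(−n+1)) = a_{n−1}·(λ⁻¹ + cosθ·ω^(−n+1))` for all `n`. -/
theorem psw_recursion_consequences (N : ℕ) [NeZero N]
    (θ : ℝ) (hθ : θ ∈ Set.Ioo 0 (Real.pi / 2))
    (lam : ℂ) (hlam : ‖lam‖ = 1)
    (a b : ZMod N → ℂ)
    (h1 : ∀ n : ZMod N,
      (Real.sin θ : ℂ) * a n - (Real.cos θ : ℂ) * b n
        = lam * (omegaN N)⁻¹ ^ n.val * b n)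
    (h2 : ∀ n : ZMod N,
      (Real.cos θ : ℂ) * a (n - 1) + (Real.sin θ : ℂ) * b (n - 1) = lam * a n) :
    ∀ n : ZMod N,
      b n * (1 + lam * (omegaN N)⁻¹ ^ n.val / (Real.cos θ : ℂ))
          = a n * (Real.tan θ : ℂ) ∧
      a n * ((Real.cos θ : ℂ) + lam * (omegaN N)⁻¹ ^ (n - 1).val)
          = a (n - 1) * (lam⁻¹ + (Real.cos θ : ℂ) * (omegaN N)⁻¹ ^ (n - 1).val) :=
  psw_recursion_consequences_general N θ hθ lam hlam a b h1 h2
end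

section
/- Let N be an odd positive integer and consider U_psw(0). (i) For every even k = 2l with 0 ≤ l ≤ N−1, the vector v with components v_{(0,n)} = (1/√N)·exp(−2πink/(2N)) and v_{(1,n)} = 0 satisfies U_psw(0)·v = exp(πik/N)·v. (ii) For every odd k with 0 ≤ k ≤ 2N−1, the vector v with components v_{(1,n)} = δ_{n,m} and v_{(0,n)} = 0, where m = (k−N)/2 mod N, satisfies U_psw(0)·v = exp(πik/N)·v. -/
/-!
At `θ = 0` the walk decouples: on coin `0` it is the cyclic shift `T`, on coin `1` the diagonal
matrix `-T̃`. The plane wave `n ↦ ω^(-l n)` is an eigenvector of `T` with eigenvalue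
`ω^l = exp(πik/N)`, and the basis vector at site `m` on coin `1` has eigenvalue
`-ω^m = exp(πi(2m + N)/N)`, which is `exp(πik/N)` when `2m = k - N`; this is solvable because `k`
and `N` are both odd.
-/

open Complex

open Matrix ZMod
open scoped Real

section
variable {N : ℕ} [NeZero N]

lemma Upsw_zero_mulVec_apply_zero (v : Fin 2 × ZMod N → ℂ) (n : ZMod N) :
    (Upsw N 0 *ᵥ v) (0, n) = v (0, n - 1) := by
  simp only [Matrix.mulVec, dotProduct, Upsw, Fintype.sum_prod_type, Fin.sum_univ_two]
  simp [← sub_eq_iff_eq_add]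

lemma Upsw_zero_mulVec_apply_one (v : Fin 2 × ZMod N → ℂ) (n : ZMod N) :
    (Upsw N 0 *ᵥ v) (1, n) = -(omegaN N ^ n.val) * v (1, n) := by
  simp [Matrix.mulVec, dotProduct, Upsw, Fintype.sum_prod_type]

lemma Upsw_zero_mulVec_eq_smul_of_shift {v : Fin 2 × ZMod N → ℂ} {μ : ℂ}
    (hv₁ : ∀ n, v (1, n) = 0) (hshift : ∀ n, v (0, n - 1) = μ * v (0, n)) :
    Upsw N 0 *ᵥ v = μ • v := by
  ext ⟨c, n⟩
  fin_cases c
  · simpa using (Upsw_zero_mulVec_apply_zero v n).trans (hshift n)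
  · simp [Upsw_zero_mulVec_apply_one, hv₁]

lemma Upsw_zero_mulVec_eq_smul_of_single {v : Fin 2 × ZMod N → ℂ} {μ : ℂ} (m : ZMod N)
    (hv₀ : ∀ n, v (0, n) = 0) (hv₁ : ∀ n, v (1, n) = if n = m then 1 else 0)
    (hμ : -(omegaN N ^ m.val) = μ) :
    Upsw N 0 *ᵥ v = μ • v := by
  ext ⟨c, n⟩
  fin_cases c
  · simp [Upsw_zero_mulVec_apply_zero, hv₀]
  · by_cases hn : n = m
    · subst hn
      simp [Upsw_zero_mulVec_apply_one, hv₁, hμ]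
    · simp [Upsw_zero_mulVec_apply_one, hv₁, hn]

lemma omegaN_pow_val (x : ZMod N) : omegaN N ^ x.val = stdAddChar x := by
  rw [stdAddChar_apply, toCircle_apply, omegaN, ← Complex.exp_nat_mul]
  congr 1
  ring

lemma exp_neg_val_mul_two_mul_eq_stdAddChar (l : ℕ) (n : ZMod N) :
    exp (-(2 * π * I * n.val * ((2 * l : ℕ) : ℂ)) / (2 * N)) =
      stdAddChar (-((l : ZMod N) * n)) := by
  have hcast : (-((l : ZMod N) * n)) = Int.cast (-(l * n.val : ℤ)) := by
    push_cast [natCast_zmod_val]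
    rfl
  rw [hcast, stdAddChar_coe]
  congr 1
  push_cast
  field_simp

lemma exp_two_mul_eq_stdAddChar (l : ℕ) :
    exp (π * I * ((2 * l : ℕ) : ℂ) / N) = stdAddChar (l : ZMod N) := by
  rw [stdAddChar_apply, toCircle_natCast]
  congr 1
  push_cast
  ring

lemma neg_omegaN_pow_val_intCast {m : ℤ} {k : ℕ} (h : 2 * m = k - N) :
    -(omegaN N ^ (m : ZMod N).val) = exp (π * I * k / N) := by
  have hk : (k : ℂ) = 2 * m + N := by
    have h' : ((2 * m : ℤ) : ℂ) = ((k - N : ℤ) : ℂ) := congrArg _ h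
    push_cast at h'
    linear_combination -h'
  have hN : (N : ℂ) ≠ 0 := NeZero.ne _
  rw [omegaN_pow_val, stdAddChar_coe, hk,
    show π * I * (2 * m + N) / N = 2 * π * I * m / N + π * I by field_simp,
    exp_add, exp_pi_mul_I]
  ring

end

/-- eigenvectors of `U_psw(0)` for odd `N`.
(i) For even `k = 2l`, `0 ≤ l ≤ N−1`, the vector supported on coin `0` with
components `(1/√N)·exp(−2πink/(2N))` is an eigenvector with eigenvalue `exp(πik/N)`.
(ii) For odd `k`, `0 ≤ k < 2N`, the vector supported on coin `1`, localized at the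
site `(k−N)/2 mod N`, is an eigenvector with eigenvalue `exp(πik/N)`. -/
theorem psw_theta_zero_eigenvectors (N : ℕ) [NeZero N] (hN : Odd N) :
    (∀ l : ℕ, l ≤ N - 1 → ∀ k : ℕ, k = 2 * l →
      ∀ v : Fin 2 × ZMod N → ℂ,
        (∀ n : ZMod N,
            v (0, n) = (1 / Real.sqrt N : ℂ) *
              Complex.exp (-(2 * Real.pi * Complex.I * n.val * k) / (2 * N)) ∧
            v (1, n) = 0) →
        (Upsw N 0).mulVec v = Complex.exp (Real.pi * Complex.I * k / N) • v) ∧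
    (∀ k : ℕ, k < 2 * N → Odd k →
      ∀ v : Fin 2 × ZMod N → ℂ,
        (∀ n : ZMod N,
            v (0, n) = 0 ∧
            v (1, n) = if n = ((((k : ℤ) - N) / 2 : ℤ) : ZMod N) then 1 else 0) →
        (Upsw N 0).mulVec v = Complex.exp (Real.pi * Complex.I * k / N) • v) := by
  refine ⟨fun l _ k hk v hv => ?_, fun k _ hk v hv => ?_⟩
  · subst hk
    have hwave (n : ZMod N) :
        v (0, n) = (1 / Real.sqrt N : ℂ) * stdAddChar (-((l : ZMod N) * n)) := by
      rw [(hv n).1, exp_neg_val_mul_two_mul_eq_stdAddChar]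
    refine Upsw_zero_mulVec_eq_smul_of_shift (fun n => (hv n).2) fun n => ?_
    rw [hwave, hwave, exp_two_mul_eq_stdAddChar, mul_left_comm, ← AddChar.map_add_eq_mul]
    ring_nf
  · have hm : 2 * (((k : ℤ) - N) / 2) = k - N :=
      Int.two_mul_ediv_two_of_even (((Int.odd_coe_nat k).2 hk).sub_odd ((Int.odd_coe_nat N).2 hN))
    exact Upsw_zero_mulVec_eq_smul_of_single _ (fun n => (hv n).1) (fun n => (hv n).2)
      (neg_omegaN_pow_val_intCast hm)
end

section
/- Let N be a positive integer and θ ∈ ℝ. Let R_N be the N×N parity matrix with entries (R_N)_{n,n'} = 1 if (n + n') ≡ 0 (mod N) and 0 otherwise, and let R̃ = U_θ ⊗ R_N, where U_θ = [[cosθ, sinθ],[sinθ, −cosθ]]. Then R̃ is a Hermitian unitary and R̃·U_psw(θ)·R̃ = U_psw(θ)†. Consequently, if λ is an eigenvalue of U_psw(θ) with eigenvector v, then conj(λ) is an eigenvalue of U_psw(θ) with eigenvector R̃·v. -/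
/-!
Write `U_psw(θ) = S · (U_θ ⊗ 1)`, where `S = |0⟩⟨0| ⊗ T + |1⟩⟨1| ⊗ T̃` is the coin-controlled
walker step, and `R̃ = (U_θ ⊗ 1)(1 ⊗ R_N)`. Since `U_θ` is a real symmetric involution,
`R̃ U_psw R̃ = (U_θ ⊗ 1) · (1 ⊗ R_N) S (1 ⊗ R_N)`. Conjugation by the parity `R_N` reflects the
walker, so it inverts both `T` and `T̃` (for `T̃` because `ω^(-n) = conj ω^n`), and these
inverses are the adjoints. Hence `R̃ U_psw R̃ = (U_θ ⊗ 1)† S† = U_psw†`. For an eigenvector `v`,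
unitarity gives `U_psw† v = conj λ · v`, and `U_psw R̃ = R̃ U_psw†` turns this into
`U_psw R̃ v = conj λ · R̃ v`.
-/

open Complex Matrix

/-- The coin operator `U_θ = [[cosθ, sinθ],[sinθ, −cosθ]]`. -/
noncomputable def coinU (θ : ℝ) : Matrix (Fin 2) (Fin 2) ℂ :=
  !![(Real.cos θ : ℂ), (Real.sin θ : ℂ); (Real.sin θ : ℂ), (-Real.cos θ : ℂ)]

/-- `R̃ = U_θ ⊗ R_N`, where `R_N` is the parity matrix
`(R_N)_{n,n'} = 1` iff `n + n' ≡ 0 (mod N)`. -/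
noncomputable def Rtilde (N : ℕ) (θ : ℝ) :
    Matrix (Fin 2 × ZMod N) (Fin 2 × ZMod N) ℂ := fun p q =>
  coinU θ p.1 q.1 * (if p.2 + q.2 = 0 then 1 else 0)

open scoped Kronecker

namespace Matrix

variable {n α : Type*}

theorem permMatrix_mem_unitaryGroup [DecidableEq n] [Fintype n] [CommRing α] [StarRing α]
    (σ : Equiv.Perm n) : σ.permMatrix α ∈ unitaryGroup n α := by
  rw [mem_unitaryGroup_iff, star_eq_conjTranspose, conjTranspose_permMatrix, ← permMatrix_mul,
    inv_mul_cancel, permMatrix_one]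

def coinControlled [Semiring α] (A B : Matrix n n α) : Matrix (Fin 2 × n) (Fin 2 × n) α :=
  single 0 0 1 ⊗ₖ A + single 1 1 1 ⊗ₖ B

theorem coinControlled_conjTranspose [CommSemiring α] [StarRing α] (A B : Matrix n n α) :
    (coinControlled A B)ᴴ = coinControlled Aᴴ Bᴴ := by
  simp [coinControlled, conjTranspose_kronecker]

theorem coinControlled_one [DecidableEq n] [Semiring α] :
    coinControlled (1 : Matrix n n α) 1 = 1 := by
  rw [coinControlled, ← add_kronecker, ← one_kronecker_one]
  congr
  ext i j
  fin_cases i <;> fin_cases j <;> simp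

variable [Fintype n]

theorem one_kronecker_mul_coinControlled_mul [CommSemiring α] (P Q A B : Matrix n n α) :
    (1 ⊗ₖ P) * coinControlled A B * (1 ⊗ₖ Q) = coinControlled (P * A * Q) (P * B * Q) := by
  simp [coinControlled, mul_add, add_mul, ← mul_kronecker_mul]

theorem coinControlled_mul_coinControlled [CommSemiring α] (A B A' B' : Matrix n n α) :
    coinControlled A B * coinControlled A' B' = coinControlled (A * A') (B * B') := by
  simp [coinControlled, mul_add, add_mul, ← mul_kronecker_mul, single_mul_single_of_ne]

theorem coinControlled_mem_unitaryGroup [DecidableEq n] [CommRing α] [StarRing α]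
    {A B : Matrix n n α} (hA : A ∈ unitaryGroup n α) (hB : B ∈ unitaryGroup n α) :
    coinControlled A B ∈ unitaryGroup (Fin 2 × n) α := by
  rw [mem_unitaryGroup_iff', star_eq_conjTranspose, coinControlled_conjTranspose,
    coinControlled_mul_coinControlled, ← star_eq_conjTranspose, ← star_eq_conjTranspose,
    mem_unitaryGroup_iff'.1 hA, mem_unitaryGroup_iff'.1 hB, coinControlled_one]

section Eigen

variable [DecidableEq n] {𝕜 : Type*} [RCLike 𝕜] {U R : Matrix n n 𝕜} {μ : 𝕜} {v : n → 𝕜}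

open scoped ComplexOrder in
theorem conjTranspose_mulVec_eq_star_smul_of_mem_unitaryGroup (hU : U ∈ unitaryGroup n 𝕜)
    (hv : U *ᵥ v = μ • v) : Uᴴ *ᵥ v = star μ • v := by
  have hUU : Uᴴ * U = 1 := mem_unitaryGroup_iff'.1 hU
  have hinv : μ • Uᴴ *ᵥ v = v := by
    rw [← mulVec_smul, ← hv, mulVec_mulVec, hUU, one_mulVec]
  rcases eq_or_ne v 0 with rfl | hv0
  · simp
  have hnorm : star μ * μ = 1 := by
    have hdot : star (U *ᵥ v) ⬝ᵥ U *ᵥ v = star v ⬝ᵥ v := by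
      rw [star_mulVec, ← dotProduct_mulVec, mulVec_mulVec, hUU, one_mulVec]
    rw [hv, star_smul, smul_dotProduct, dotProduct_smul, smul_smul, smul_eq_mul] at hdot
    exact mul_right_cancel₀ (dotProduct_star_self_eq_zero.not.2 hv0) (hdot.trans (one_mul _).symm)
  calc Uᴴ *ᵥ v = (star μ * μ) • Uᴴ *ᵥ v := by rw [hnorm, one_smul]
    _ = star μ • v := by rw [mul_smul, hinv]

theorem mulVec_mulVec_eq_star_smul_of_mul_mul_eq_conjTranspose (hR : R * R = 1)
    (hRUR : R * U * R = Uᴴ) (hU : U ∈ unitaryGroup n 𝕜) (hv : U *ᵥ v = μ • v) :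
    U *ᵥ R *ᵥ v = star μ • R *ᵥ v := by
  have hUR : U * R = R * Uᴴ := by
    rw [← hRUR, ← mul_assoc, ← mul_assoc, hR, one_mul]
  rw [mulVec_mulVec, hUR, ← mulVec_mulVec,
    conjTranspose_mulVec_eq_star_smul_of_mem_unitaryGroup hU hv, mulVec_smul]

end Eigen

end Matrix

section Walker

variable (G : Type*) [AddCommGroup G] [DecidableEq G] {α : Type*}

def parity [Zero α] [One α] : Matrix G G α := (Equiv.neg G).permMatrix α

def shift [Zero α] [One α] (a : G) : Matrix G G α := Equiv.Perm.permMatrix α (Equiv.subRight a)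

variable {G}

theorem parity_apply [Zero α] [One α] (i j : G) :
    (parity G : Matrix G G α) i j = if i + j = 0 then 1 else 0 := by
  simp [parity, PEquiv.toMatrix_apply, neg_eq_iff_add_eq_zero]

theorem shift_apply [Zero α] [One α] (a i j : G) :
    (shift G a : Matrix G G α) i j = if i = j + a then 1 else 0 := by
  simp [shift, sub_eq_iff_eq_add]

theorem parity_conjTranspose [NonAssocSemiring α] [StarRing α] :
    (parity G : Matrix G G α)ᴴ = parity G := by
  rw [parity, conjTranspose_permMatrix]
  rfl

variable [Fintype G]

theorem parity_mul_mul_parity [NonAssocSemiring α] (M : Matrix G G α) :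
    parity G * M * parity G = M.submatrix Neg.neg Neg.neg := by
  rw [parity, PEquiv.toMatrix_toPEquiv_mul, PEquiv.mul_toMatrix_toPEquiv]
  rfl

theorem parity_mul_parity [NonAssocSemiring α] : (parity G : Matrix G G α) * parity G = 1 := by
  simpa using (parity_mul_mul_parity (1 : Matrix G G α)).trans (submatrix_one_equiv (Equiv.neg G))

theorem parity_mul_shift_mul_parity [NonAssocSemiring α] [StarRing α] (a : G) :
    parity G * shift G a * parity G = (shift G a : Matrix G G α)ᴴ := by
  ext i j
  have h : -i = -j + a ↔ j = i + a := by grind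
  simp [parity_mul_mul_parity, shift_apply, h, apply_ite star]

theorem parity_mul_diagonal_mul_parity [NonAssocSemiring α] (d : G → α) :
    parity G * diagonal d * parity G = diagonal fun i => d (-i) := by
  rw [parity_mul_mul_parity]
  exact submatrix_diagonal_equiv d (Equiv.neg G)

end Walker

section Clock

variable (N : ℕ) [NeZero N]

noncomputable def clock : Matrix (ZMod N) (ZMod N) ℂ := diagonal fun n => ZMod.stdAddChar n

variable {N}

theorem ZMod.star_stdAddChar (n : ZMod N) : star (ZMod.stdAddChar n) = ZMod.stdAddChar (-n) := by
  rw [ZMod.stdAddChar_apply, ZMod.stdAddChar_apply, AddChar.map_neg_eq_inv,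
    Circle.coe_inv_eq_conj]
  rfl

theorem omegaN_pow_val_s17 (n : ZMod N) : omegaN N ^ n.val = ZMod.stdAddChar n := by
  rw [ZMod.stdAddChar_apply, ZMod.toCircle_apply, omegaN, ← Complex.exp_nat_mul]
  congr 1
  ring

theorem parity_mul_clock_mul_parity :
    parity (ZMod N) * clock N * parity (ZMod N) = (clock N)ᴴ := by
  rw [clock, parity_mul_diagonal_mul_parity, diagonal_conjTranspose]
  simp_rw [Pi.star_def, ZMod.star_stdAddChar]

theorem clock_mem_unitaryGroup : clock N ∈ unitaryGroup (ZMod N) ℂ := by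
  rw [mem_unitaryGroup_iff', star_eq_conjTranspose, clock, diagonal_conjTranspose,
    diagonal_mul_diagonal]
  simp_rw [Pi.star_def, ZMod.star_stdAddChar, ← AddChar.map_add_eq_mul, neg_add_cancel,
    AddChar.map_zero_eq_one, diagonal_one]

end Clock

theorem coinU_conjTranspose (θ : ℝ) : (coinU θ)ᴴ = coinU θ := by
  ext i j
  fin_cases i <;> fin_cases j <;> simp [coinU, -Complex.ofReal_cos, -Complex.ofReal_sin]

theorem coinU_mul_self (θ : ℝ) : coinU θ * coinU θ = 1 := by
  ext i j
  fin_cases i <;> fin_cases j <;> simp [coinU, mul_apply, Fin.sum_univ_two] <;>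
    first | ring1 | linear_combination Complex.cos_sq_add_sin_sq (θ : ℂ)

theorem Rtilde_eq_kronecker (N : ℕ) (θ : ℝ) : Rtilde N θ = coinU θ ⊗ₖ parity (ZMod N) := by
  ext p q
  simp [Rtilde, parity_apply]

theorem Upsw_eq_coinControlled_mul (N : ℕ) [NeZero N] (θ : ℝ) :
    Upsw N θ = coinControlled (shift (ZMod N) 1) (clock N) * (coinU θ ⊗ₖ 1) := by
  ext ⟨c, i⟩ ⟨d, j⟩
  fin_cases c <;> fin_cases d <;>
    simp [Upsw, coinControlled, add_mul, ← mul_kronecker_mul, shift_apply, clock, coinU,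
      omegaN_pow_val_s17, diagonal_apply] <;>
    split_ifs <;> simp_all

section Chiral

variable (N : ℕ) (θ : ℝ)

theorem Rtilde_conjTranspose : (Rtilde N θ)ᴴ = Rtilde N θ := by
  rw [Rtilde_eq_kronecker, conjTranspose_kronecker, coinU_conjTranspose, parity_conjTranspose]

variable [NeZero N]

theorem Rtilde_mul_self : Rtilde N θ * Rtilde N θ = 1 := by
  rw [Rtilde_eq_kronecker, ← mul_kronecker_mul, coinU_mul_self, parity_mul_parity,
    one_kronecker_one]

theorem Upsw_mem_unitaryGroup : Upsw N θ ∈ unitaryGroup (Fin 2 × ZMod N) ℂ := by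
  have hcoin : coinU θ ∈ unitaryGroup (Fin 2) ℂ := by
    rw [mem_unitaryGroup_iff, star_eq_conjTranspose, coinU_conjTranspose, coinU_mul_self]
  rw [Upsw_eq_coinControlled_mul]
  exact mul_mem (coinControlled_mem_unitaryGroup (permMatrix_mem_unitaryGroup _)
    clock_mem_unitaryGroup) (kronecker_mem_unitary hcoin (one_mem _))

theorem Rtilde_mul_Upsw_mul_Rtilde : Rtilde N θ * Upsw N θ * Rtilde N θ = (Upsw N θ)ᴴ := by
  have hR : Rtilde N θ = (coinU θ ⊗ₖ 1) * (1 ⊗ₖ parity (ZMod N)) := by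
    rw [Rtilde_eq_kronecker, ← mul_kronecker_mul, mul_one, one_mul]
  have hcoinR : (coinU θ ⊗ₖ 1) * Rtilde N θ = 1 ⊗ₖ parity (ZMod N) := by
    rw [Rtilde_eq_kronecker, ← mul_kronecker_mul, coinU_mul_self, one_mul]
  calc Rtilde N θ * Upsw N θ * Rtilde N θ
      = (coinU θ ⊗ₖ 1) * ((1 ⊗ₖ parity (ZMod N)) * coinControlled (shift (ZMod N) 1) (clock N)
          * (1 ⊗ₖ parity (ZMod N))) := by
        rw [Upsw_eq_coinControlled_mul, mul_assoc _ _ (Rtilde N θ), mul_assoc _ (coinU θ ⊗ₖ 1),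
          hcoinR, hR]
        simp only [mul_assoc]
    _ = (coinU θ ⊗ₖ 1)ᴴ * (coinControlled (shift (ZMod N) 1) (clock N))ᴴ := by
        rw [one_kronecker_mul_coinControlled_mul, parity_mul_shift_mul_parity,
          parity_mul_clock_mul_parity, coinControlled_conjTranspose, conjTranspose_kronecker,
          coinU_conjTranspose, conjTranspose_one]
    _ = (Upsw N θ)ᴴ := by rw [Upsw_eq_coinControlled_mul, conjTranspose_mul]

end Chiral

/-- `R̃` is a Hermitian unitary satisfying `R̃·U_psw(θ)·R̃ = U_psw(θ)†`,
and consequently if `U_psw(θ)·v = λ·v` with `v ≠ 0`, then `R̃·v` is a (nonzero)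
eigenvector of `U_psw(θ)` with eigenvalue `conj(λ)`. -/
theorem psw_chiral_symmetry (N : ℕ) [NeZero N] (θ : ℝ) :
    (Rtilde N θ)ᴴ = Rtilde N θ ∧
    Rtilde N θ ∈ Matrix.unitaryGroup (Fin 2 × ZMod N) ℂ ∧
    Rtilde N θ * Upsw N θ * Rtilde N θ = (Upsw N θ)ᴴ ∧
    (∀ (lam : ℂ) (v : Fin 2 × ZMod N → ℂ), v ≠ 0 →
      (Upsw N θ).mulVec v = lam • v →
      (Rtilde N θ).mulVec v ≠ 0 ∧
        (Upsw N θ).mulVec ((Rtilde N θ).mulVec v)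
          = (starRingEnd ℂ) lam • (Rtilde N θ).mulVec v) := by
  have hR2 := Rtilde_mul_self N θ
  refine ⟨Rtilde_conjTranspose N θ, ?_, Rtilde_mul_Upsw_mul_Rtilde N θ,
    fun lam v hv0 hv => ⟨fun hRv => hv0 ?_, ?_⟩⟩
  · rw [mem_unitaryGroup_iff, star_eq_conjTranspose, Rtilde_conjTranspose, hR2]
  · rw [← one_mulVec v, ← hR2, ← mulVec_mulVec, hRv, mulVec_zero]
  · exact mulVec_mulVec_eq_star_smul_of_mul_mul_eq_conjTranspose hR2
      (Rtilde_mul_Upsw_mul_Rtilde N θ) (Upsw_mem_unitaryGroup N θ) hv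
end
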